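/- arXiv:1904.05612 — 9 statements merged into one kernel-verified Lean document; each statement's English description precedes it below -/
import Mathlib

section
/- Let A be a unital C*-algebra, M a star-subalgebra of A, N a star-subalgebra of M, and e ∈ A a projection (e* = e and e² = e) that commutes with every element of N. Let E : M → N be a map satisfying e x e = E(x) e for all x ∈ M. Let λ₁, …, λ_k ∈ M and set q_{ij} := E(λᵢ* λⱼ). If the k×k matrix Q = [q_{ij}] is a projection in M_k(N), i.e. (q_{ij})* = q_{ji} for all i, j and Σ_{l=1}^k q_{il} q_{lj} = q_{ij} for all i, j, then the element f := Σ_{i=1}^k λᵢ e λᵢ* is a projection in A, i.e. f* = f and f² = f. -/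
/-- Abstract form of Proposition 2.4: if the matrix `Q = [E(λᵢ* λⱼ)]` is a projection in
`M_k(N)`, then `f = Σᵢ λᵢ e λᵢ*` is a projection in `A`. -/
theorem statement_0
    {A : Type*} [NormedRing A] [StarRing A] [CStarRing A]
    [NormedAlgebra ℂ A] [StarModule ℂ A] [CompleteSpace A]
    (M N : StarSubalgebra ℂ A) (hNM : N ≤ M)
    (e : A) (heStar : star e = e) (heIdem : e * e = e)
    (heComm : ∀ n ∈ N, e * n = n * e)
    (E : A → A)
    (hEmem : ∀ x ∈ M, E x ∈ N)
    (hEe : ∀ x ∈ M, e * x * e = E x * e)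
    {k : ℕ} (lam : Fin k → A) (hlam : ∀ i, lam i ∈ M)
    (hQstar : ∀ i j, star (E (star (lam i) * lam j)) = E (star (lam j) * lam i))
    (hQidem : ∀ i j, ∑ l, E (star (lam i) * lam l) * E (star (lam l) * lam j)
        = E (star (lam i) * lam j)) :
    star (∑ i, lam i * e * star (lam i)) = ∑ i, lam i * e * star (lam i) ∧
      (∑ i, lam i * e * star (lam i)) * (∑ i, lam i * e * star (lam i))
        = ∑ i, lam i * e * star (lam i) := by
  set f := ∑ i, lam i * e * star (lam i) with hf
  have key : ∀ i j, e * (star (lam i) * lam j) * e = E (star (lam i) * lam j) * e :=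
    fun i j => hEe _ (mul_mem (star_mem (hlam i)) (hlam j))
  have hstar : star f = f := by
    rw [hf, star_sum]
    refine Finset.sum_congr rfl fun i _ => ?_
    simp [star_mul, heStar, mul_assoc]
  -- pointwise product
  have hpt : ∀ i j, (lam i * e * star (lam i)) * (lam j * e * star (lam j))
      = lam i * E (star (lam i) * lam j) * e * star (lam j) := by
    intro i j
    have := key i j
    calc (lam i * e * star (lam i)) * (lam j * e * star (lam j))
        = lam i * (e * (star (lam i) * lam j) * e) * star (lam j) := by
          noncomm_ring
      _ = lam i * (E (star (lam i) * lam j) * e) * star (lam j) := by rw [this]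
      _ = lam i * E (star (lam i) * lam j) * e * star (lam j) := by
          noncomm_ring
  have hf2 : f * f = ∑ i, ∑ j, lam i * E (star (lam i) * lam j) * e * star (lam j) := by
    rw [hf, Finset.sum_mul]
    refine Finset.sum_congr rfl fun i _ => ?_
    rw [Finset.mul_sum]
    exact Finset.sum_congr rfl fun j _ => hpt i j
  have hf3 : f * f * f = f * f := by
    rw [hf2]
    conv_lhs => rw [hf]
    calc (∑ i, ∑ j, lam i * E (star (lam i) * lam j) * e * star (lam j))
            * (∑ l, lam l * e * star (lam l))
        = ∑ l, ∑ i, ∑ j, (lam i * E (star (lam i) * lam j) * e * star (lam j))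
            * (lam l * e * star (lam l)) := by
          rw [Finset.mul_sum]
          refine Finset.sum_congr rfl fun l _ => ?_
          rw [Finset.sum_mul]
          exact Finset.sum_congr rfl fun i _ => Finset.sum_mul _ _ _
      _ = ∑ l, ∑ i, ∑ j, lam i * (E (star (lam i) * lam j) * E (star (lam j) * lam l))
            * e * star (lam l) := by
          refine Finset.sum_congr rfl fun l _ => Finset.sum_congr rfl fun i _ =>
            Finset.sum_congr rfl fun j _ => ?_
          calc (lam i * E (star (lam i) * lam j) * e * star (lam j))
                * (lam l * e * star (lam l))
              = lam i * E (star (lam i) * lam j)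
                  * (e * (star (lam j) * lam l) * e) * star (lam l) := by noncomm_ring
            _ = lam i * E (star (lam i) * lam j)
                  * (E (star (lam j) * lam l) * e) * star (lam l) := by rw [key j l]
            _ = lam i * (E (star (lam i) * lam j) * E (star (lam j) * lam l))
                  * e * star (lam l) := by noncomm_ring
      _ = ∑ l, ∑ i, lam i * E (star (lam i) * lam l) * e * star (lam l) := by
          refine Finset.sum_congr rfl fun l _ => Finset.sum_congr rfl fun i _ => ?_
          have : (∑ j, lam i * (E (star (lam i) * lam j) * E (star (lam j) * lam l))
              * e * star (lam l))
              = lam i * (∑ j, E (star (lam i) * lam j) * E (star (lam j) * lam l))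
                * e * star (lam l) := by
            rw [Finset.mul_sum, Finset.sum_mul, Finset.sum_mul]
          rw [this, hQidem i l]
      _ = ∑ i, ∑ j, lam i * E (star (lam i) * lam j) * e * star (lam j) :=
          Finset.sum_comm
  -- d = f*f - f is self-adjoint with d*d = 0
  have hf4 : f * f * (f * f) = f * f := by
    rw [← mul_assoc, hf3, hf3]
  have hd : (f * f - f) * (f * f - f) = 0 := by
    have : (f * f - f) * (f * f - f) = f * f * (f * f) - f * f * f - (f * f * f - f * f) := by
      noncomm_ring
    rw [this, hf3, hf4]
    abel
  have hdstar : star (f * f - f) = f * f - f := by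
    rw [star_sub, star_mul, hstar]
  have hdzero : f * f - f = 0 := by
    have hnorm : ‖f * f - f‖ * ‖f * f - f‖ = 0 := by
      rw [← CStarRing.norm_star_mul_self, hdstar, hd, norm_zero]
    have := mul_self_eq_zero.mp hnorm
    exact norm_eq_zero.mp this
  exact ⟨hstar, by linear_combination (norm := noncomm_ring) hdzero⟩
end

section
/- Let A be a unital star-ring, M a star-subring of A, and N a star-subring of M. Let e ∈ A be a projection (e* = e, e² = e) commuting with every element of N, and let E : M → N be a map satisfying e x e = E(x) e for all x ∈ M, and such that for every n ∈ N, n e = 0 implies n = 0. Let λ₁, …, λ_k ∈ M and let f ∈ A be a projection satisfying: (1) f e = e f = e; (2) Σ_{i=1}^k λᵢ e λᵢ* = f; and (3) λᵢ f = f λᵢ for all i. Then the k×k matrix [E(λᵢ* λⱼ)] is a projection in M_k(N), i.e. E(λᵢ* λⱼ)* = E(λⱼ* λᵢ) for all i, j and Σ_{l=1}^k E(λᵢ* λ_l) E(λ_l* λⱼ) = E(λᵢ* λⱼ) for all i, j. -/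
/-- Abstract form of Proposition 2.7: if `f` is a projection with `f ≥ e`,
`Σᵢ λᵢ e λᵢ* = f` and each `λᵢ` commutes with `f`, then the matrix `[E(λᵢ* λⱼ)]`
is a projection in `M_k(N)`. -/
theorem statement_1
    {A : Type*} [Ring A] [StarRing A]
    (M N : Subring A) (hNM : N ≤ M)
    (hMstar : ∀ x ∈ M, star x ∈ M) (hNstar : ∀ x ∈ N, star x ∈ N)
    (e : A) (heStar : star e = e) (heIdem : e * e = e)
    (heComm : ∀ n ∈ N, e * n = n * e)
    (E : A → A)
    (hEmem : ∀ x ∈ M, E x ∈ N)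
    (hEe : ∀ x ∈ M, e * x * e = E x * e)
    (hsep : ∀ n ∈ N, n * e = 0 → n = 0)
    {k : ℕ} (lam : Fin k → A) (hlam : ∀ i, lam i ∈ M)
    (f : A) (hfStar : star f = f) (hfIdem : f * f = f)
    (hfe : f * e = e) (hef : e * f = e)
    (hsum : ∑ i, lam i * e * star (lam i) = f)
    (hcomm : ∀ i, lam i * f = f * lam i) :
    (∀ i j, star (E (star (lam i) * lam j)) = E (star (lam j) * lam i)) ∧
      (∀ i j, ∑ l, E (star (lam i) * lam l) * E (star (lam l) * lam j)
        = E (star (lam i) * lam j)) := by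
  have hmem : ∀ i j : Fin k, star (lam i) * lam j ∈ M := fun i j =>
    M.mul_mem (hMstar _ (hlam i)) (hlam j)
  -- star compatibility of E
  have hEstar : ∀ x ∈ M, star (E x) = E (star x) := by
    intro x hx
    have hxs : star x ∈ M := hMstar _ hx
    have h1 : star (E x) * e = E (star x) * e := by
      calc star (E x) * e = star (E x) * star e := by rw [heStar]
        _ = star (e * E x) := (star_mul _ _).symm
        _ = star (E x * e) := by rw [heComm _ (hEmem _ hx)]
        _ = star (e * x * e) := by rw [hEe _ hx]
        _ = e * star x * e := by simp [star_mul, heStar, mul_assoc]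
        _ = E (star x) * e := hEe _ hxs
    have hz : (star (E x) - E (star x)) * e = 0 := by rw [sub_mul, h1, sub_self]
    have := hsep _ (N.sub_mem (hNstar _ (hEmem _ hx)) (hEmem _ hxs)) hz
    exact sub_eq_zero.mp this
  constructor
  · intro i j
    rw [hEstar _ (hmem i j)]
    simp [star_mul]
  · intro i j
    have key : (∑ l, E (star (lam i) * lam l) * E (star (lam l) * lam j)) * e
        = E (star (lam i) * lam j) * e := by
      have hterm : ∀ l : Fin k,
          E (star (lam i) * lam l) * E (star (lam l) * lam j) * e
            = e * star (lam i) * (lam l * e * star (lam l)) * lam j * e := by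
        intro l
        have h1 : E (star (lam l) * lam j) * e = e * (star (lam l) * lam j) * e :=
          (hEe _ (hmem l j)).symm
        have h2 : E (star (lam i) * lam l) * e = e * (star (lam i) * lam l) * e :=
          (hEe _ (hmem i l)).symm
        calc E (star (lam i) * lam l) * E (star (lam l) * lam j) * e
            = E (star (lam i) * lam l) * (E (star (lam l) * lam j) * e) := by
              rw [mul_assoc]
          _ = E (star (lam i) * lam l) * (e * (star (lam l) * lam j) * e) := by rw [h1]
          _ = (E (star (lam i) * lam l) * e) * ((star (lam l) * lam j) * e) := by
              noncomm_ring
          _ = (e * (star (lam i) * lam l) * e) * ((star (lam l) * lam j) * e) := by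
              rw [h2]
          _ = e * star (lam i) * (lam l * e * star (lam l)) * lam j * e := by
              noncomm_ring
      calc (∑ l, E (star (lam i) * lam l) * E (star (lam l) * lam j)) * e
          = ∑ l, E (star (lam i) * lam l) * E (star (lam l) * lam j) * e :=
            Finset.sum_mul ..
        _ = ∑ l, e * star (lam i) * (lam l * e * star (lam l)) * lam j * e := by
            exact Finset.sum_congr rfl fun l _ => hterm l
        _ = e * star (lam i) * (∑ l, lam l * e * star (lam l)) * lam j * e := by
            simp [Finset.mul_sum, Finset.sum_mul, mul_assoc]
        _ = e * star (lam i) * f * lam j * e := by rw [hsum]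
        _ = e * star (lam i) * (f * lam j) * e := by noncomm_ring
        _ = e * star (lam i) * (lam j * f) * e := by rw [hcomm j]
        _ = e * (star (lam i) * lam j) * (f * e) := by noncomm_ring
        _ = e * (star (lam i) * lam j) * e := by rw [hfe]
        _ = E (star (lam i) * lam j) * e := hEe _ (hmem i j)
    have hnm : (∑ l, E (star (lam i) * lam l) * E (star (lam l) * lam j))
        - E (star (lam i) * lam j) ∈ N := by
      refine N.sub_mem (N.sum_mem fun l _ => N.mul_mem ?_ ?_) (hEmem _ (hmem i j)) <;>
        exact hEmem _ (hmem _ _)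
    have hz : ((∑ l, E (star (lam i) * lam l) * E (star (lam l) * lam j))
        - E (star (lam i) * lam j)) * e = 0 := by rw [sub_mul, key, sub_self]
    exact sub_eq_zero.mp (hsep _ hnm hz)
end

section
/- Let A be a star-ring, let N ⊆ P ⊆ M be star-subrings of A, and let e, g ∈ A. Let E_P : M → P be an additive map with E_P(p x) = p E_P(x) for all p ∈ P and x ∈ M, and let E_N' : P → N be an additive map. Assume: (1) e x e = E_N'(E_P(x)) e for all x ∈ M; (2) g x e = E_P(x) e for all x ∈ M; (3) if z ∈ A satisfies z x e = 0 for all x ∈ M, then z = 0. If λ₁, …, λ_k ∈ P satisfy y = Σ_{i=1}^k λᵢ E_N'(λᵢ* y) for all y ∈ P, then Σ_{i=1}^k λᵢ e λᵢ* = g. -/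
/-- Abstract form of the claim in Section 2.2.1: a Pimsner–Popa basis for an intermediate
algebra `P` over `N` is a Pimsner–Popa system for `M` over `N` with support the Jones
projection `g = e_P`. -/
theorem statement_2
    {A : Type*} [Ring A] [StarRing A]
    (N P M : Subring A) (hNP : N ≤ P) (hPM : P ≤ M)
    (hNstar : ∀ x ∈ N, star x ∈ N) (hPstar : ∀ x ∈ P, star x ∈ P)
    (hMstar : ∀ x ∈ M, star x ∈ M)
    (e g : A)
    (EP : A → A)
    (hEPmem : ∀ x ∈ M, EP x ∈ P)
    (hEPadd : ∀ x ∈ M, ∀ y ∈ M, EP (x + y) = EP x + EP y)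
    (hEPmod : ∀ p ∈ P, ∀ x ∈ M, EP (p * x) = p * EP x)
    (EN : A → A)
    (hENmem : ∀ x ∈ P, EN x ∈ N)
    (hENadd : ∀ x ∈ P, ∀ y ∈ P, EN (x + y) = EN x + EN y)
    (h1 : ∀ x ∈ M, e * x * e = EN (EP x) * e)
    (h2 : ∀ x ∈ M, g * x * e = EP x * e)
    (h3 : ∀ z : A, (∀ x ∈ M, z * x * e = 0) → z = 0)
    {k : ℕ} (lam : Fin k → A) (hlam : ∀ i, lam i ∈ P)
    (hbasis : ∀ y ∈ P, y = ∑ i, lam i * EN (star (lam i) * y)) :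
    ∑ i, lam i * e * star (lam i) = g := by
  have key : ∀ z : A, (∀ x ∈ M, z * x * e = 0) → z = 0 := h3
  have hz : ((∑ i, lam i * e * star (lam i)) - g) = 0 := by
    apply h3
    intro x hx
    have hstar : ∀ i, star (lam i) ∈ P := fun i => hPstar _ (hlam i)
    have hterm : ∀ i, (lam i * e * star (lam i)) * x * e
        = lam i * (EN (star (lam i) * EP x) * e) := by
      intro i
      have hmem : star (lam i) * x ∈ M := M.mul_mem (hPM (hstar i)) hx
      have := h1 _ hmem
      have hmod := hEPmod _ (hstar i) _ hx
      calc (lam i * e * star (lam i)) * x * e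
          = lam i * (e * (star (lam i) * x) * e) := by noncomm_ring
        _ = lam i * (EN (EP (star (lam i) * x)) * e) := by rw [this]
        _ = lam i * (EN (star (lam i) * EP x) * e) := by rw [hmod]
    have hsum : (∑ i, lam i * e * star (lam i)) * x * e
        = (∑ i, lam i * EN (star (lam i) * EP x)) * e := by
      rw [Finset.sum_mul, Finset.sum_mul, Finset.sum_mul]
      exact Finset.sum_congr rfl fun i _ => by rw [hterm i, mul_assoc]
    have hb := hbasis (EP x) (hEPmem _ hx)
    rw [sub_mul, sub_mul, hsum, ← hb, h2 _ hx, sub_self]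
  exact sub_eq_zero.mp hz
end

section
/- Let M be a unital complex star-algebra, N a star-subalgebra of M, and E : M → N a conditional expectation. Let w ∈ M be unitary with w N w* = N. If the only element a ∈ N satisfying a x = (w x w*) a for all x ∈ N is a = 0 (i.e., the automorphism Ad w of N is free), then E(w) = 0. -/
/-- Algebraic core of Lemma 2.12 / Proposition 3.7: if `Ad w` is a free automorphism of `N`
for a normalizing unitary `w`, then `E(w) = 0`. -/
theorem statement_3
    {M : Type*} [Ring M] [Algebra ℂ M] [StarRing M] [StarModule ℂ M]
    (N : StarSubalgebra ℂ M)
    (E : M →ₗ[ℂ] M)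
    (hEmem : ∀ x : M, E x ∈ N)
    (hEid : ∀ n ∈ N, E n = n)
    (hEbimod : ∀ n ∈ N, ∀ m ∈ N, ∀ x : M, E (n * x * m) = n * E x * m)
    (hEstar : ∀ x : M, E (star x) = star (E x))
    (w : M) (hw1 : star w * w = 1) (hw2 : w * star w = 1)
    (hwN : (fun x => w * x * star w) '' (N : Set M) = (N : Set M))
    (hfree : ∀ a ∈ N, (∀ x ∈ N, a * x = (w * x * star w) * a) → a = 0) :
    E w = 0 := by
  apply hfree (E w) (hEmem w)
  intro x hx
  have hmem : w * x * star w ∈ N := by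
    have : w * x * star w ∈ ((fun x => w * x * star w) '' (N : Set M)) := ⟨x, hx, rfl⟩
    rw [hwN] at this
    exact this
  have h1 : E w * x = E (w * x) := by
    have := hEbimod 1 N.one_mem x hx w
    simpa using this.symm
  have h2 : E (w * x) = (w * x * star w) * E w := by
    have := hEbimod (w * x * star w) hmem 1 N.one_mem w
    have key : w * x * star w * w * 1 = w * x := by
      rw [mul_one, mul_assoc, hw1, mul_one]
    simpa [key] using this
  rw [h1, h2]
end

section
/- Let M be a unital complex star-algebra, let N ⊆ R ⊆ M be star-subalgebras, let E_R : M → R be a conditional expectation onto R, and let E : R → N be a conditional expectation onto N. Suppose there exist λ₁, …, λ_k ∈ R, each commuting with every element of N, such that r = Σ_{i=1}^k λᵢ E(λᵢ* r) for all r ∈ R. Let w ∈ M be unitary with w N w* = N and w R w* = R, and suppose the only element a ∈ N satisfying a x = (w x w*) a for all x ∈ N is a = 0. Then E_R(w) = 0. -/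
/-!
`v = E_R(w)` satisfies `v x = (w x w*) v` for `x ∈ N`, because `w` does and `E_R` is
`N`-bimodular. Multiplying by `λᵢ*`, which commutes with `N ∋ w x w*`, and applying the
`N`-bimodular `E` keeps this relation, so each coefficient `E(λᵢ* v) ∈ N` of `v` in the
Pimsner–Popa basis vanishes by freeness of `Ad w`. Hence `v = 0`.
-/

def Intertwines {A : Type*} [Mul A] (θ : A → A) (S : Set A) (a : A) : Prop :=
  ∀ x ∈ S, a * x = θ x * a

namespace Intertwines

variable {A : Type*} [Monoid A] {θ : A → A} {S : Set A} {a : A}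

theorem mul_left {b : A} (ha : Intertwines θ S a) (hb : ∀ x ∈ S, b * θ x = θ x * b) :
    Intertwines θ S (b * a) := fun x hx => by
  rw [mul_assoc, ha x hx, ← mul_assoc, hb x hx, mul_assoc]

theorem map_of_bimodular {Φ : A → A} {T : Set A} (hS1 : 1 ∈ S) (hθ : ∀ x ∈ S, θ x ∈ S)
    (hΦ : ∀ r ∈ S, ∀ s ∈ S, ∀ x ∈ T, Φ (r * x * s) = r * Φ x * s)
    (haT : a ∈ T) (ha : Intertwines θ S a) : Intertwines θ S (Φ a) := fun x hx =>
  calc Φ a * x = Φ (1 * a * x) := by rw [hΦ 1 hS1 x hx a haT, one_mul]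
    _ = Φ (θ x * a * 1) := by rw [one_mul, mul_one, ha x hx]
    _ = θ x * Φ a := by rw [hΦ _ (hθ x hx) 1 hS1 a haT, mul_one]

end Intertwines

theorem intertwines_conj_self {A : Type*} [Monoid A] [StarMul A] {w : A}
    (hw : star w * w = 1) (S : Set A) : Intertwines (fun x => w * x * star w) S w :=
  fun x _ => by rw [mul_assoc _ (star w), hw, mul_one]

theorem statement_4_general
    {M : Type*} [Ring M] [Algebra ℂ M] [StarRing M] [StarModule ℂ M]
    (N R : StarSubalgebra ℂ M) (hNR : N ≤ R)
    (ER : M →ₗ[ℂ] M)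
    (hERmem : ∀ x : M, ER x ∈ R)
    (hERbimod : ∀ r ∈ R, ∀ s ∈ R, ∀ x : M, ER (r * x * s) = r * ER x * s)
    (E : M →ₗ[ℂ] M)
    (hEmem : ∀ x ∈ R, E x ∈ N)
    (hEbimod : ∀ n ∈ N, ∀ m ∈ N, ∀ x ∈ R, E (n * x * m) = n * E x * m)
    {k : ℕ} (lam : Fin k → M) (hlam : ∀ i, lam i ∈ R)
    (hcomm : ∀ i, ∀ n ∈ N, lam i * n = n * lam i)
    (hbasis : ∀ r ∈ R, r = ∑ i, lam i * E (star (lam i) * r))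
    (w : M) (hw1 : star w * w = 1)
    (hwN : (fun x => w * x * star w) '' (N : Set M) = (N : Set M))
    (hfree : ∀ a ∈ N, (∀ x ∈ N, a * x = (w * x * star w) * a) → a = 0) :
    ER w = 0 := by
  have hAdN : ∀ x ∈ (N : Set M), w * x * star w ∈ (N : Set M) :=
    fun x hx => hwN ▸ Set.mem_image_of_mem _ hx
  have hv : Intertwines (fun x => w * x * star w) N (ER w) :=
    (intertwines_conj_self hw1 N).map_of_bimodular (T := Set.univ) N.one_mem hAdN
      (fun r hr s hs x _ => hERbimod r (hNR hr) s (hNR hs) x) trivial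
  have hcoeff : ∀ i, E (star (lam i) * ER w) = 0 := fun i => by
    have hmem : star (lam i) * ER w ∈ R := mul_mem (star_mem (hlam i)) (hERmem w)
    refine hfree _ (hEmem _ hmem) (Intertwines.map_of_bimodular N.one_mem hAdN hEbimod hmem ?_)
    exact hv.mul_left fun x hx =>
      commute_star_comm.mpr (hcomm i _ (star_mem (hAdN x hx)))
  rw [hbasis _ (hERmem w)]
  exact Finset.sum_eq_zero fun i _ => by rw [hcoeff i, mul_zero]

/-- Abstract form of the key assertion in Proposition 3.7: for a unitary `w` normalizing
both `N` and `R`, with `Ad w` free on `N` and a Pimsner–Popa basis of `R` over `N`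
contained in the commutant of `N`, one has `E_R(w) = 0`. -/
theorem statement_4
    {M : Type*} [Ring M] [Algebra ℂ M] [StarRing M] [StarModule ℂ M]
    (N R : StarSubalgebra ℂ M) (hNR : N ≤ R)
    (ER : M →ₗ[ℂ] M)
    (hERmem : ∀ x : M, ER x ∈ R)
    (hERid : ∀ r ∈ R, ER r = r)
    (hERbimod : ∀ r ∈ R, ∀ s ∈ R, ∀ x : M, ER (r * x * s) = r * ER x * s)
    (hERstar : ∀ x : M, ER (star x) = star (ER x))
    (E : M →ₗ[ℂ] M)
    (hEmem : ∀ x ∈ R, E x ∈ N)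
    (hEid : ∀ n ∈ N, E n = n)
    (hEbimod : ∀ n ∈ N, ∀ m ∈ N, ∀ x ∈ R, E (n * x * m) = n * E x * m)
    (hEstar : ∀ x ∈ R, E (star x) = star (E x))
    {k : ℕ} (lam : Fin k → M) (hlam : ∀ i, lam i ∈ R)
    (hcomm : ∀ i, ∀ n ∈ N, lam i * n = n * lam i)
    (hbasis : ∀ r ∈ R, r = ∑ i, lam i * E (star (lam i) * r))
    (w : M) (hw1 : star w * w = 1) (hw2 : w * star w = 1)
    (hwN : (fun x => w * x * star w) '' (N : Set M) = (N : Set M))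
    (hwR : (fun x => w * x * star w) '' (R : Set M) = (R : Set M))
    (hfree : ∀ a ∈ N, (∀ x ∈ N, a * x = (w * x * star w) * a) → a = 0) :
    ER w = 0 :=
  statement_4_general N R hNR ER hERmem hERbimod E hEmem hEbimod lam hlam hcomm hbasis w hw1 hwN
    hfree
end

section
/- Let M be a unital complex star-algebra, N a unital star-subalgebra, and C := {x ∈ M : x n = n x for all n ∈ N} the relative commutant of N in M. Let τ : M → ℂ be a ℂ-linear functional and E : M → N a conditional expectation satisfying the commuting-square condition E(c) = τ(c)·1 for all c ∈ C. Suppose λ₁, …, λ_k ∈ C satisfy, for all c ∈ C, both c = Σ_{i=1}^k τ(c λᵢ*) λᵢ and c = Σ_{i=1}^k τ(λᵢ* c) λᵢ. Then for every x in the subalgebra of M generated by N ∪ C, one has x = Σ_{i=1}^k E(x λᵢ*) λᵢ and x = Σ_{i=1}^k λᵢ E(λᵢ* x). -/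
/-- Algebraic core of Lemma 3.4: a two-sided basis of the relative commutant `C = N' ∩ M`
over `ℂ` (with respect to `τ`), under the commuting-square condition `E(c) = τ(c)·1`,
is a two-sided basis of the algebra generated by `N ∪ C` over `N`. -/
theorem statement_9
    {M : Type*} [Ring M] [Algebra ℂ M] [StarRing M] [StarModule ℂ M]
    (N : StarSubalgebra ℂ M)
    (τ : M →ₗ[ℂ] ℂ)
    (E : M →ₗ[ℂ] M)
    (hEmem : ∀ x : M, E x ∈ N)
    (hEid : ∀ n ∈ N, E n = n)
    (hEbimod : ∀ n ∈ N, ∀ m ∈ N, ∀ x : M, E (n * x * m) = n * E x * m)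
    (hEstar : ∀ x : M, E (star x) = star (E x))
    (hcs : ∀ c ∈ {x : M | ∀ n ∈ N, x * n = n * x}, E c = τ c • (1 : M))
    {k : ℕ} (lam : Fin k → M)
    (hlam : ∀ i, lam i ∈ {x : M | ∀ n ∈ N, x * n = n * x})
    (hleft : ∀ c ∈ {x : M | ∀ n ∈ N, x * n = n * x},
      c = ∑ i, τ (c * star (lam i)) • lam i)
    (hright : ∀ c ∈ {x : M | ∀ n ∈ N, x * n = n * x},
      c = ∑ i, τ (star (lam i) * c) • lam i) :
    ∀ x ∈ Algebra.adjoin ℂ ((N : Set M) ∪ {x : M | ∀ n ∈ N, x * n = n * x}),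
      x = ∑ i, E (x * star (lam i)) * lam i ∧
      x = ∑ i, lam i * E (star (lam i) * x) := by
  classical
  set Cset : Set M := {x : M | ∀ n ∈ N, x * n = n * x} with hCdef
  have hCstar : ∀ c ∈ Cset, star c ∈ Cset := by
    intro c hc n hn
    have h := hc (star n) (star_mem hn)
    calc star c * n = star (star n * c) := by simp
      _ = star (c * star n) := by rw [h]
      _ = n * star c := by simp
  have hCmul : ∀ a ∈ Cset, ∀ b ∈ Cset, a * b ∈ Cset := by
    intro a ha b hb n hn
    rw [mul_assoc, hb n hn, ← mul_assoc, ha n hn, mul_assoc]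
  have hCone : (1 : M) ∈ Cset := by intro n hn; simp
  set S : Set M := {x : M | ∃ n ∈ N, ∃ c ∈ Cset, x = n * c} with hSdef
  -- base case: products n * c satisfy both identities
  have hbase : ∀ y ∈ S,
      y = ∑ i, E (y * star (lam i)) * lam i ∧
      y = ∑ i, lam i * E (star (lam i) * y) := by
    rintro _ ⟨n, hn, c, hc, rfl⟩
    constructor
    · have key : ∀ i, E (n * c * star (lam i)) * lam i
          = n * (τ (c * star (lam i)) • lam i) := by
        intro i
        have h1 : c * star (lam i) ∈ Cset := hCmul c hc _ (hCstar _ (hlam i))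
        have h2 : E (n * (c * star (lam i)) * 1) = n * E (c * star (lam i)) * 1 :=
          hEbimod n hn 1 N.one_mem _
        simp only [mul_one] at h2
        rw [mul_assoc, h2, hcs _ h1]
        simp [mul_smul_comm, smul_mul_assoc]
      calc n * c = n * ∑ i, τ (c * star (lam i)) • lam i := by rw [← hleft c hc]
        _ = ∑ i, n * (τ (c * star (lam i)) • lam i) := by rw [Finset.mul_sum]
        _ = ∑ i, E (n * c * star (lam i)) * lam i := by
            exact Finset.sum_congr rfl fun i _ => (key i).symm
    · have key : ∀ i, lam i * E (star (lam i) * (n * c))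
          = n * (τ (star (lam i) * c) • lam i) := by
        intro i
        have h1 : star (lam i) * c ∈ Cset := hCmul _ (hCstar _ (hlam i)) c hc
        have hcomm : star (lam i) * n = n * star (lam i) := hCstar _ (hlam i) n hn
        have h3 : star (lam i) * (n * c) = n * (star (lam i) * c) := by
          rw [← mul_assoc, hcomm, mul_assoc]
        have h2 : E (n * (star (lam i) * c) * 1) = n * E (star (lam i) * c) * 1 :=
          hEbimod n hn 1 N.one_mem _
        simp only [mul_one] at h2
        rw [h3, h2, hcs _ h1]
        have h4 : lam i * n = n * lam i := hlam i n hn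
        simp only [mul_smul_comm, mul_one, h4]
      calc n * c = n * ∑ i, τ (star (lam i) * c) • lam i := by rw [← hright c hc]
        _ = ∑ i, n * (τ (star (lam i) * c) • lam i) := by rw [Finset.mul_sum]
        _ = ∑ i, lam i * E (star (lam i) * (n * c)) := by
            exact Finset.sum_congr rfl fun i _ => (key i).symm
  -- the span of S is multiplicatively closed
  have hmulS : ∀ a ∈ S, ∀ b ∈ S, a * b ∈ S := by
    rintro _ ⟨n, hn, c, hc, rfl⟩ _ ⟨n', hn', c', hc', rfl⟩
    refine ⟨n * n', mul_mem hn hn', c * c', hCmul _ hc _ hc', ?_⟩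
    have h := hc n' hn'
    simp only [mul_assoc]
    rw [← mul_assoc c, h, mul_assoc]
  have hST : ∀ a ∈ Submodule.span ℂ S, ∀ b ∈ Submodule.span ℂ S,
      a * b ∈ Submodule.span ℂ S := by
    intro a ha b hb
    refine Submodule.span_induction (p := fun a _ => a * b ∈ Submodule.span ℂ S)
      ?_ ?_ ?_ ?_ ha
    · intro a haS
      refine Submodule.span_induction (p := fun b _ => a * b ∈ Submodule.span ℂ S)
        ?_ ?_ ?_ ?_ hb
      · intro b hbS; exact Submodule.subset_span (hmulS a haS b hbS)
      · simp
      · intro x y _ _ hx hy; rw [mul_add]; exact add_mem hx hy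
      · intro r x _ hx; rw [mul_smul_comm]; exact Submodule.smul_mem _ _ hx
    · simp
    · intro x y _ _ hx hy; rw [add_mul]; exact add_mem hx hy
    · intro r x _ hx; rw [smul_mul_assoc]; exact Submodule.smul_mem _ _ hx
  have hone : (1 : M) ∈ S := ⟨1, N.one_mem, 1, hCone, (one_mul 1).symm⟩
  let A : Subalgebra ℂ M :=
    { carrier := Submodule.span ℂ S
      add_mem' := fun ha hb => add_mem ha hb
      mul_mem' := fun ha hb => hST _ ha _ hb
      one_mem' := Submodule.subset_span hone
      zero_mem' := zero_mem _
      algebraMap_mem' := fun r => by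
        have := Submodule.smul_mem (Submodule.span ℂ S) r (Submodule.subset_span hone)
        simpa [Algebra.algebraMap_eq_smul_one] using this }
  intro x hx
  have hsub : (N : Set M) ∪ Cset ⊆ A := by
    rintro y (hy | hy)
    · exact Submodule.subset_span ⟨y, hy, 1, hCone, (mul_one y).symm⟩
    · exact Submodule.subset_span ⟨1, N.one_mem, y, hy, (one_mul y).symm⟩
  have hx' : x ∈ Submodule.span ℂ S := Algebra.adjoin_le hsub hx
  refine Submodule.span_induction (p := fun y _ =>
      y = ∑ i, E (y * star (lam i)) * lam i ∧
      y = ∑ i, lam i * E (star (lam i) * y)) ?_ ?_ ?_ ?_ hx'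
  · exact hbase
  · simp
  · intro a b _ _ ha hb
    constructor
    · calc a + b = (∑ i, E (a * star (lam i)) * lam i) + ∑ i, E (b * star (lam i)) * lam i := by
            rw [← ha.1, ← hb.1]
        _ = ∑ i, E ((a + b) * star (lam i)) * lam i := by
            rw [← Finset.sum_add_distrib]
            exact Finset.sum_congr rfl fun i _ => by rw [add_mul, map_add, add_mul]
    · calc a + b = (∑ i, lam i * E (star (lam i) * a)) + ∑ i, lam i * E (star (lam i) * b) := by
            rw [← ha.2, ← hb.2]
        _ = ∑ i, lam i * E (star (lam i) * (a + b)) := by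
            rw [← Finset.sum_add_distrib]
            exact Finset.sum_congr rfl fun i _ => by rw [mul_add, map_add, mul_add]
  · intro r a _ ha
    constructor
    · calc r • a = r • ∑ i, E (a * star (lam i)) * lam i := by rw [← ha.1]
        _ = ∑ i, E (r • a * star (lam i)) * lam i := by
            rw [Finset.smul_sum]
            exact Finset.sum_congr rfl fun i _ => by
              rw [smul_mul_assoc, map_smul, smul_mul_assoc]
    · calc r • a = r • ∑ i, lam i * E (star (lam i) * a) := by rw [← ha.2]
        _ = ∑ i, lam i * E (star (lam i) * (r • a)) := by
            rw [Finset.smul_sum]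
            exact Finset.sum_congr rfl fun i _ => by
              rw [mul_smul_comm, map_smul, mul_smul_comm]
end

section
/- Let R be a unital complex star-algebra, N a star-subalgebra of R, and E : R → N a conditional expectation. Suppose λ₁, …, λ_k ∈ R each commute with every element of N and satisfy r = Σ_{i=1}^k λᵢ E(λᵢ* r) for all r ∈ R. Let θ : R → R be an algebra automorphism with θ(N) = N. If there exists a nonzero r ∈ R with r x = θ(x) r for all x ∈ R, then there exists a nonzero a ∈ N with a x = θ(x) a for all x ∈ N. Equivalently: if the restriction of θ to N is free (admits no such nonzero a), then θ is a free automorphism of R. -/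
/-- Algebraic content of Lemma 3.5: if `θ` is an automorphism of `R` preserving `N`, and
`R` has a basis over `N` contained in the commutant of `N`, then non-freeness of `θ`
on `R` implies non-freeness of `θ` restricted to `N`. -/
theorem statement_10
    {R : Type*} [Ring R] [Algebra ℂ R] [StarRing R] [StarModule ℂ R]
    (N : StarSubalgebra ℂ R)
    (E : R →ₗ[ℂ] R)
    (hEmem : ∀ x : R, E x ∈ N)
    (hEid : ∀ n ∈ N, E n = n)
    (hEbimod : ∀ n ∈ N, ∀ m ∈ N, ∀ x : R, E (n * x * m) = n * E x * m)
    (hEstar : ∀ x : R, E (star x) = star (E x))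
    {k : ℕ} (lam : Fin k → R)
    (hcomm : ∀ i, ∀ n ∈ N, lam i * n = n * lam i)
    (hbasis : ∀ r : R, r = ∑ i, lam i * E (star (lam i) * r))
    (θ : R ≃ₐ[ℂ] R)
    (hθN : (fun x => θ x) '' (N : Set R) = (N : Set R))
    (r : R) (hr : r ≠ 0) (hrx : ∀ x : R, r * x = θ x * r) :
    ∃ a ∈ N, a ≠ 0 ∧ ∀ x ∈ N, a * x = θ x * a := by
  have hall : ¬ ∀ i, E (star (lam i) * r) = 0 := by
    intro hz
    apply hr
    rw [hbasis r]
    simp [hz]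
  push_neg at hall
  obtain ⟨i, hi⟩ := hall
  refine ⟨E (star (lam i) * r), hEmem _, hi, ?_⟩
  intro n hn
  have hθn : θ n ∈ N := by
    have := hθN ▸ Set.mem_image_of_mem (fun x => θ x) hn
    simpa using this
  have hstarcomm : star (lam i) * θ n = θ n * star (lam i) := by
    have h1 := hcomm i (star (θ n)) (star_mem hθn)
    have h2 := congrArg star h1
    simpa [star_mul] using h2.symm
  calc E (star (lam i) * r) * n
      = E ((1 : R) * (star (lam i) * r) * n) := by
        rw [hEbimod 1 N.one_mem n hn, one_mul]
    _ = E (star (lam i) * (r * n)) := by rw [one_mul, mul_assoc]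
    _ = E (star (lam i) * (θ n * r)) := by rw [hrx n]
    _ = E (θ n * (star (lam i) * r) * 1) := by
        rw [← mul_assoc, hstarcomm, mul_one, mul_assoc]
    _ = θ n * E (star (lam i) * r) := by
        rw [hEbimod (θ n) hθn 1 N.one_mem, mul_one]
end

section
/- Let M be a unital complex star-algebra with a faithful trace τ, let N ⊆ P ⊆ M be star-subalgebras, and let E : M → N be a τ-preserving conditional expectation, i.e., a conditional expectation with τ(E(x)) = τ(x) for all x ∈ M. Let λ₁, …, λ_m ∈ P satisfy x = Σ_{i=1}^m E(x λᵢ*) λᵢ for all x ∈ P. If u ∈ M is a unitary with u P u* = P and u N u* = N, then the conjugated family also satisfies x = Σ_{i=1}^m E(x (u λᵢ u*)*) (u λᵢ u*) for all x ∈ P. -/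
/-- Lemma 3.8: a unitary normalizing both `P` and `N` carries a Pimsner–Popa basis for
`P` over `N` (w.r.t. the trace-preserving conditional expectation) to another such basis. -/
theorem statement_11
    {M : Type*} [Ring M] [Algebra ℂ M] [StarRing M] [StarModule ℂ M]
    (τ : M →ₗ[ℂ] ℂ)
    (hτtr : ∀ x y : M, τ (x * y) = τ (y * x))
    (hτfaithful : ∀ x : M, τ (star x * x) = 0 → x = 0)
    (N P : StarSubalgebra ℂ M) (hNP : N ≤ P)
    (E : M →ₗ[ℂ] M)
    (hEmem : ∀ x : M, E x ∈ N)
    (hEid : ∀ n ∈ N, E n = n)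
    (hEbimod : ∀ n ∈ N, ∀ m ∈ N, ∀ x : M, E (n * x * m) = n * E x * m)
    (hEstar : ∀ x : M, E (star x) = star (E x))
    (hEτ : ∀ x : M, τ (E x) = τ x)
    {m : ℕ} (lam : Fin m → M) (hlam : ∀ i, lam i ∈ P)
    (hbasis : ∀ x ∈ P, x = ∑ i, E (x * star (lam i)) * lam i)
    (u : M) (hu1 : star u * u = 1) (hu2 : u * star u = 1)
    (huP : (fun x => u * x * star u) '' (P : Set M) = (P : Set M))
    (huN : (fun x => u * x * star u) '' (N : Set M) = (N : Set M)) :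
    ∀ x ∈ P, x = ∑ i, E (x * star (u * lam i * star u)) * (u * lam i * star u) := by
  -- conjugation facts
  have hconj : ∀ q : M, star u * (u * q * star u) * u = q := by
    intro q
    have h : star u * (u * q * star u) * u = (star u * u) * q * (star u * u) := by
      noncomm_ring
    rw [h, hu1, one_mul, mul_one]
  have huNf : ∀ n ∈ N, u * n * star u ∈ N := by
    intro n hn
    have : u * n * star u ∈ (fun x => u * x * star u) '' (N : Set M) := ⟨n, hn, rfl⟩
    rwa [huN] at this
  have huNb : ∀ n ∈ N, star u * n * u ∈ N := by
    intro n hn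
    have hn' : n ∈ (N : Set M) := hn
    rw [← huN] at hn'
    obtain ⟨q, hq, rfl⟩ := hn'
    simpa [hconj q] using hq
  have huPb : ∀ p ∈ P, star u * p * u ∈ P := by
    intro p hp
    have hp' : p ∈ (P : Set M) := hp
    rw [← huP] at hp'
    obtain ⟨q, hq, rfl⟩ := hp'
    simpa [hconj q] using hq
  -- E is a left N-module map
  have hEleft : ∀ c ∈ N, ∀ x : M, E (c * x) = c * E x := by
    intro c hc x
    have := hEbimod c hc 1 N.one_mem x
    simpa using this
  have hτE : ∀ c ∈ N, ∀ x : M, τ (c * E x) = τ (c * x) := by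
    intro c hc x
    rw [← hEleft c hc x, hEτ]
  -- key: E commutes with Ad u
  have hkey : ∀ y : M, E (u * y * star u) = u * E y * star u := by
    intro y
    set a := E (u * y * star u) - u * E y * star u with ha_def
    have ha : a ∈ N := N.sub_mem (hEmem _) (huNf _ (hEmem y))
    have hsa : star a ∈ N := star_mem ha
    have h1 : τ (star a * E (u * y * star u)) = τ (star a * (u * y * star u)) :=
      hτE _ hsa _
    have h2 : τ (star a * (u * E y * star u)) = τ (star a * (u * y * star u)) := by
      have hc : star u * star a * u ∈ N := by
        simpa [mul_assoc] using huNb (star a) hsa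
      have cyc1 : ∀ z : M, τ (star a * (u * z * star u)) = τ ((star u * star a * u) * z) := by
        intro z
        have e1 : star a * (u * z * star u) = (star a * u * z) * star u := by noncomm_ring
        have e2 : star u * (star a * u * z) = (star u * star a * u) * z := by noncomm_ring
        rw [e1, hτtr, e2]
      rw [cyc1, cyc1, hτE _ hc]
    have hzero : τ (star a * a) = 0 := by
      have : star a * a = star a * E (u * y * star u) - star a * (u * E y * star u) := by
        rw [ha_def]; noncomm_ring
      rw [this, map_sub, h1, h2, sub_self]
    have := hτfaithful a hzero
    exact sub_eq_zero.mp this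
  -- main computation
  intro x hx
  set y := star u * x * u with hy_def
  have hyP : y ∈ P := huPb x hx
  have hxy : x = u * y * star u := by
    have h : u * (star u * x * u) * star u = (u * star u) * x * (u * star u) := by
      noncomm_ring
    rw [hy_def, h, hu2, one_mul, mul_one]
  have hterm : ∀ i, E (x * star (u * lam i * star u)) * (u * lam i * star u)
      = u * (E (y * star (lam i)) * lam i) * star u := by
    intro i
    have hst : star (u * lam i * star u) = u * star (lam i) * star u := by
      simp [star_mul, mul_assoc]
    have harg : x * star (u * lam i * star u) = u * (y * star (lam i)) * star u := by
      rw [hst, hxy]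
      have : u * y * star u * (u * star (lam i) * star u)
          = u * y * (star u * u) * star (lam i) * star u := by noncomm_ring
      rw [this, hu1, mul_one]
      noncomm_ring
    rw [harg, hkey]
    have : u * E (y * star (lam i)) * star u * (u * lam i * star u)
        = u * E (y * star (lam i)) * (star u * u) * lam i * star u := by noncomm_ring
    rw [this, hu1, mul_one]
    noncomm_ring
  calc x = u * y * star u := hxy
    _ = u * (∑ i, E (y * star (lam i)) * lam i) * star u := by rw [← hbasis y hyP]
    _ = ∑ i, u * (E (y * star (lam i)) * lam i) * star u := by
        rw [Finset.mul_sum, Finset.sum_mul]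
    _ = ∑ i, E (x * star (u * lam i * star u)) * (u * lam i * star u) := by
        exact Finset.sum_congr rfl fun i _ => (hterm i).symm
end

section
/- Let M be a unital complex star-algebra with a faithful trace τ, let N ⊆ P ⊆ M be star-subalgebras, and let E_N : M → N and E_P : M → P be τ-preserving conditional expectations. Suppose λ₁, …, λ_m ∈ P form a two-sided Pimsner–Popa basis for P over N via E_N, i.e., for all x ∈ P, x = Σ_i E_N(x λᵢ*) λᵢ and x = Σ_i λᵢ E_N(λᵢ* x); and suppose μ₁, …, μ_n ∈ M form a two-sided Pimsner–Popa basis for M over P via E_P such that each μⱼ is a unitary with μⱼ P μⱼ* = P and μⱼ N μⱼ* = N. Then the family {μⱼ λᵢ : 1 ≤ i ≤ m, 1 ≤ j ≤ n} is a two-sided Pimsner–Popa basis for M over N via E_N: for all x ∈ M, x = Σ_{i,j} E_N(x (μⱼ λᵢ)*) (μⱼ λᵢ) and x = Σ_{i,j} (μⱼ λᵢ) E_N((μⱼ λᵢ)* x). -/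
/-- Proposition 3.9 (patching): if `{λᵢ}` is a two-sided basis for `P` over `N` and
`{μⱼ}` is a two-sided basis for `M` over `P` consisting of unitaries normalizing both
`P` and `N`, then `{μⱼ λᵢ}` is a two-sided basis for `M` over `N`. -/
theorem statement_12
    {M : Type*} [Ring M] [Algebra ℂ M] [StarRing M] [StarModule ℂ M]
    (τ : M →ₗ[ℂ] ℂ)
    (hτtr : ∀ x y : M, τ (x * y) = τ (y * x))
    (hτfaithful : ∀ x : M, τ (star x * x) = 0 → x = 0)
    (N P : StarSubalgebra ℂ M) (hNP : N ≤ P)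
    (EN : M →ₗ[ℂ] M)
    (hENmem : ∀ x : M, EN x ∈ N)
    (hENid : ∀ n ∈ N, EN n = n)
    (hENbimod : ∀ n ∈ N, ∀ p ∈ N, ∀ x : M, EN (n * x * p) = n * EN x * p)
    (hENstar : ∀ x : M, EN (star x) = star (EN x))
    (hENτ : ∀ x : M, τ (EN x) = τ x)
    (EP : M →ₗ[ℂ] M)
    (hEPmem : ∀ x : M, EP x ∈ P)
    (hEPid : ∀ p ∈ P, EP p = p)
    (hEPbimod : ∀ p ∈ P, ∀ q ∈ P, ∀ x : M, EP (p * x * q) = p * EP x * q)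
    (hEPstar : ∀ x : M, EP (star x) = star (EP x))
    (hEPτ : ∀ x : M, τ (EP x) = τ x)
    {m : ℕ} (lam : Fin m → M) (hlam : ∀ i, lam i ∈ P)
    (hlamL : ∀ x ∈ P, x = ∑ i, EN (x * star (lam i)) * lam i)
    (hlamR : ∀ x ∈ P, x = ∑ i, lam i * EN (star (lam i) * x))
    {n : ℕ} (mu : Fin n → M)
    (hmuL : ∀ x : M, x = ∑ j, EP (x * star (mu j)) * mu j)
    (hmuR : ∀ x : M, x = ∑ j, mu j * EP (star (mu j) * x))
    (hmuU : ∀ j, star (mu j) * mu j = 1 ∧ mu j * star (mu j) = 1)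
    (hmuP : ∀ j, (fun x => mu j * x * star (mu j)) '' (P : Set M) = (P : Set M))
    (hmuN : ∀ j, (fun x => mu j * x * star (mu j)) '' (N : Set M) = (N : Set M)) :
    (∀ x : M, x = ∑ j, ∑ i, EN (x * star (mu j * lam i)) * (mu j * lam i)) ∧
    (∀ x : M, x = ∑ j, ∑ i, (mu j * lam i) * EN (star (mu j * lam i) * x)) := by

  classical
  have h1N : (1 : M) ∈ N := one_mem N
  have h1P : (1 : M) ∈ P := one_mem P
  have hENl : ∀ n ∈ N, ∀ x : M, EN (n * x) = n * EN x := by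
    intro n hn x
    simpa using hENbimod n hn 1 h1N x
  have hEPl : ∀ p ∈ P, ∀ x : M, EP (p * x) = p * EP x := by
    intro p hp x
    simpa using hEPbimod p hp 1 h1P x
  have hEPr : ∀ p ∈ P, ∀ x : M, EP (x * p) = EP x * p := by
    intro p hp x
    simpa using hEPbimod 1 h1P p hp x
  -- uniqueness of τ-preserving left-N-modular maps into N
  have uniq : ∀ F : M → M, (∀ x, F x ∈ N) →
      (∀ n ∈ N, ∀ x : M, F (n * x) = n * F x) →
      (∀ x : M, τ (F x) = τ x) → ∀ x : M, F x = EN x := by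
    intro F hFmem hFl hFτ x
    have hdmem : EN x - F x ∈ N := sub_mem (hENmem x) (hFmem x)
    have hsd : star (EN x - F x) ∈ N := star_mem hdmem
    have e1 : τ (star (EN x - F x) * EN x) = τ (star (EN x - F x) * x) := by
      rw [← hENl _ hsd x, hENτ]
    have e2 : τ (star (EN x - F x) * F x) = τ (star (EN x - F x) * x) := by
      rw [← hFl _ hsd x, hFτ]
    have hz : τ (star (EN x - F x) * (EN x - F x)) = 0 := by
      rw [mul_sub, map_sub, e1, e2, sub_self]
    have := hτfaithful _ hz
    exact (sub_eq_zero.mp this).symm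
  -- conjugation by the unitaries commutes with EN
  have hconj : ∀ j (x : M), EN (mu j * x * star (mu j))
      = mu j * EN x * star (mu j) := by
    intro j x
    obtain ⟨huu, huus⟩ := hmuU j
    have memN1 : ∀ n ∈ N, mu j * n * star (mu j) ∈ N := by
      intro n hn
      have h : mu j * n * star (mu j) ∈ (fun x => mu j * x * star (mu j)) '' (N : Set M) :=
        Set.mem_image_of_mem _ hn
      rwa [hmuN j] at h
    have memN2 : ∀ n ∈ N, star (mu j) * n * mu j ∈ N := by
      intro n hn
      have h : n ∈ (fun x => mu j * x * star (mu j)) '' (N : Set M) := by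
        rw [hmuN j]; exact hn
      obtain ⟨y, hy, hyy⟩ := h
      have : star (mu j) * n * mu j = y := by
        rw [← hyy]
        calc star (mu j) * (mu j * y * star (mu j)) * mu j
            = (star (mu j) * mu j) * y * (star (mu j) * mu j) := by noncomm_ring
          _ = y := by rw [huu, one_mul, mul_one]
      rw [this]; exact hy
    have key := uniq (fun z => star (mu j) * EN (mu j * z * star (mu j)) * mu j)
      (fun z => memN2 _ (hENmem _))
      (by
        intro nn hn z
        show star (mu j) * EN (mu j * (nn * z) * star (mu j)) * mu j
            = nn * (star (mu j) * EN (mu j * z * star (mu j)) * mu j)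
        have k1 : mu j * (nn * z) * star (mu j)
            = (mu j * nn * star (mu j)) * (mu j * z * star (mu j)) := by
          have h2 : (mu j * nn * star (mu j)) * (mu j * z * star (mu j))
              = mu j * nn * (star (mu j) * mu j) * (z * star (mu j)) := by
            noncomm_ring
          rw [h2, huu, mul_one]
          noncomm_ring
        rw [k1, hENl _ (memN1 nn hn) (mu j * z * star (mu j))]
        have h3 : star (mu j) * ((mu j * nn * star (mu j))
              * EN (mu j * z * star (mu j))) * mu j
            = (star (mu j) * mu j) * nn
                * (star (mu j) * EN (mu j * z * star (mu j)) * mu j) := by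
          noncomm_ring
        rw [h3, huu, one_mul, mul_assoc])
      (by
        intro z
        show τ (star (mu j) * EN (mu j * z * star (mu j)) * mu j) = τ z
        calc τ (star (mu j) * EN (mu j * z * star (mu j)) * mu j)
            = τ (star (mu j) * (EN (mu j * z * star (mu j)) * mu j)) := by
              rw [mul_assoc]
          _ = τ ((EN (mu j * z * star (mu j)) * mu j) * star (mu j)) := hτtr _ _
          _ = τ (EN (mu j * z * star (mu j))) := by
              rw [mul_assoc, huus, mul_one]
          _ = τ (mu j * z * star (mu j)) := hENτ _
          _ = τ (star (mu j) * (mu j * z)) := hτtr _ _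
          _ = τ z := by rw [← mul_assoc, huu, one_mul]) x
    have h2 : mu j * (star (mu j) * EN (mu j * x * star (mu j)) * mu j) * star (mu j)
        = mu j * EN x * star (mu j) := by rw [key]
    rw [← h2]
    calc EN (mu j * x * star (mu j))
        = (mu j * star (mu j)) * EN (mu j * x * star (mu j)) * (mu j * star (mu j)) := by
          rw [huus, one_mul, mul_one]
      _ = mu j * (star (mu j) * EN (mu j * x * star (mu j)) * mu j) * star (mu j) := by
          noncomm_ring
  -- EN ∘ EP = EN
  have hENEP : ∀ x : M, EN (EP x) = EN x := by
    refine uniq (fun x => EN (EP x)) (fun x => hENmem _) ?_ (fun x => by rw [hENτ, hEPτ])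
    intro nn hn x
    show EN (EP (nn * x)) = nn * EN (EP x)
    rw [hEPl nn (hNP hn) x, hENl nn hn]
  constructor
  · intro x
    have hstep : ∀ j : Fin n, ∑ i, EN (x * star (mu j * lam i)) * (mu j * lam i)
        = mu j * EP (star (mu j) * x) := by
      intro j
      obtain ⟨huu, huus⟩ := hmuU j
      have hmem : EP (star (mu j) * x) ∈ P := hEPmem _
      have key : ∀ i, EN (x * star (mu j * lam i)) * (mu j * lam i)
          = mu j * (EN (EP (star (mu j) * x) * star (lam i)) * lam i) := by
        intro i
        have e0 : x * star (mu j * lam i) =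
            mu j * (star (mu j) * x * star (lam i)) * star (mu j) := by
          rw [star_mul]
          calc x * (star (lam i) * star (mu j))
              = 1 * (x * star (lam i)) * star (mu j) := by noncomm_ring
            _ = (mu j * star (mu j)) * (x * star (lam i)) * star (mu j) := by rw [huus]
            _ = mu j * (star (mu j) * x * star (lam i)) * star (mu j) := by noncomm_ring
        rw [e0, hconj j]
        have e1 : EN (star (mu j) * x * star (lam i))
            = EN (EP (star (mu j) * x) * star (lam i)) := by
          rw [← hENEP (star (mu j) * x * star (lam i)),
              hEPr (star (lam i)) (star_mem (hlam i)) (star (mu j) * x)]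
        rw [e1]
        calc (mu j * EN (EP (star (mu j) * x) * star (lam i)) * star (mu j)) * (mu j * lam i)
            = mu j * (EN (EP (star (mu j) * x) * star (lam i))
                * ((star (mu j) * mu j) * lam i)) := by noncomm_ring
          _ = mu j * (EN (EP (star (mu j) * x) * star (lam i)) * lam i) := by
              rw [huu, one_mul]
      rw [Finset.sum_congr rfl (fun i _ => key i), ← Finset.mul_sum, ← hlamL _ hmem]
    calc x = ∑ j, mu j * EP (star (mu j) * x) := hmuR x
      _ = ∑ j, ∑ i, EN (x * star (mu j * lam i)) * (mu j * lam i) :=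
          Finset.sum_congr rfl fun j _ => (hstep j).symm
  · intro x
    have hstep : ∀ j : Fin n, ∑ i, (mu j * lam i) * EN (star (mu j * lam i) * x)
        = mu j * EP (star (mu j) * x) := by
      intro j
      have hmem : EP (star (mu j) * x) ∈ P := hEPmem _
      have key : ∀ i, (mu j * lam i) * EN (star (mu j * lam i) * x)
          = mu j * (lam i * EN (star (lam i) * EP (star (mu j) * x))) := by
        intro i
        rw [star_mul]
        have e1 : EN (star (lam i) * star (mu j) * x)
            = EN (star (lam i) * EP (star (mu j) * x)) := by
          have h4 : star (lam i) * star (mu j) * x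
              = star (lam i) * (star (mu j) * x) := by rw [mul_assoc]
          rw [← hENEP (star (lam i) * star (mu j) * x), h4,
              hEPl (star (lam i)) (star_mem (hlam i))]
        rw [e1]; noncomm_ring
      rw [Finset.sum_congr rfl (fun i _ => key i), ← Finset.mul_sum, ← hlamR _ hmem]
    calc x = ∑ j, mu j * EP (star (mu j) * x) := hmuR x
      _ = ∑ j, ∑ i, (mu j * lam i) * EN (star (mu j * lam i) * x) :=
          Finset.sum_congr rfl fun j _ => (hstep j).symm
end
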